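/- arXiv:2504.18921 — 2 statements merged into one kernel-verified Lean document; each statement's English description precedes it below -/
import Mathlib

section
/- (Theorem 1) Suppose the system is s-sparse observable, and suppose the attacks satisfy supp(a_i) ⊆ Γ for all i, for some fixed Γ ⊆ {1,…,q} with |Γ| = s. Then there exists r ≤ n (namely r = b, the maximum over all size-s sets Γ' of the minimum r' with rank O_{Γ'}(r') = n) such that for every k ≥ r−1 the state x_{k−r+1} equals at least one element of the set X(k,r) = { L_{Γ'}(Y_{k,Γ'} − D_{Γ'} U_{k−1}) : Γ' ⊆ {1,…,q}, |Γ'| = s }. -/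
/-! Take `r = n` and `Γ' = Γ`. Stacking `n` consecutive outputs of a trajectory gives
`Y_{k,S} = O_S(n) x_{k-n+1} + D_S U_{k-1} + A_{k,S}` for every `S`; for `S = Γ` the attack term
`A_{k,Γ}` vanishes since every attack is supported on `Γ`, and `O_Γ(n)` has full column rank by
sparse observability, so its left inverse `L_Γ` recovers `x_{k-n+1}`. -/

open Matrix

namespace SS

variable {n p q : ℕ}

/-- The matrix obtained from a matrix `M` with `q` rows by deleting the rows indexed by `S`. -/
def dele {m' : ℕ} (M : Matrix (Fin q) (Fin m') ℝ) (S : Finset (Fin q)) :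
    Matrix {i : Fin q // i ∉ S} (Fin m') ℝ :=
  fun i j => M i.1 j

/-- The vector obtained from `v ∈ ℝ^q` by deleting the entries indexed by `S`. -/
def delv (v : Fin q → ℝ) (S : Finset (Fin q)) : {i : Fin q // i ∉ S} → ℝ :=
  fun i => v i.1

/-- A trajectory of the system `x_{k+1} = A x_k + B u_k`, `y_k = C x_k + a_k`. -/
def Traj (A : Matrix (Fin n) (Fin n) ℝ) (B : Matrix (Fin n) (Fin p) ℝ)
    (C : Matrix (Fin q) (Fin n) ℝ) (x : ℕ → Fin n → ℝ) (u : ℕ → Fin p → ℝ)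
    (a y : ℕ → Fin q → ℝ) : Prop :=
  (∀ k, x (k + 1) = A *ᵥ x k + B *ᵥ u k) ∧ ∀ k, y k = C *ᵥ x k + a k

/-- The stacked matrix `[M; MA; …; MA^{r-1}]`. -/
def stack (A : Matrix (Fin n) (Fin n) ℝ) {ι : Type} (M : Matrix ι (Fin n) ℝ)
    (r : ℕ) : Matrix (Fin r × ι) (Fin n) ℝ :=
  fun i j => (M * A ^ (i.1 : ℕ)) i.2 j

/-- The pair `(A, M)` is observable: `[M; MA; …; MA^{n-1}]` has rank `n`. -/
def Observable (A : Matrix (Fin n) (Fin n) ℝ) {ι : Type} [Fintype ι]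
    (M : Matrix ι (Fin n) ℝ) : Prop :=
  (stack A M n).rank = n

/-- `s`-sparse observability: `(A, C(Γ))` is observable for every `Γ` with `|Γ| = s`. -/
def SparseObs (A : Matrix (Fin n) (Fin n) ℝ) (C : Matrix (Fin q) (Fin n) ℝ)
    (s : ℕ) : Prop :=
  ∀ Γ : Finset (Fin q), Γ.card = s → Observable A (dele C Γ)

/-- `O_S(r) = [C(S); C(S)A; …; C(S)A^{r-1}]`. -/
def Omat (A : Matrix (Fin n) (Fin n) ℝ) (C : Matrix (Fin q) (Fin n) ℝ)
    (S : Finset (Fin q)) (r : ℕ) :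
    Matrix (Fin r × {i : Fin q // i ∉ S}) (Fin n) ℝ :=
  stack A (dele C S) r

/-- `L_S = (O_S(r)ᵀ O_S(r))⁻¹ O_S(r)ᵀ`. -/
noncomputable def Lmat (A : Matrix (Fin n) (Fin n) ℝ) (C : Matrix (Fin q) (Fin n) ℝ)
    (S : Finset (Fin q)) (r : ℕ) :
    Matrix (Fin n) (Fin r × {i : Fin q // i ∉ S}) ℝ :=
  ((Omat A C S r)ᵀ * Omat A C S r)⁻¹ * (Omat A C S r)ᵀ

/-- Stacked output `Y_{k,S} = [y_{k-r+1}(S); …; y_k(S)]`. -/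
def Yvec (y : ℕ → Fin q → ℝ) (S : Finset (Fin q)) (r k : ℕ) :
    Fin r × {i : Fin q // i ∉ S} → ℝ :=
  fun i => delv (y (k + 1 - r + (i.1 : ℕ))) S i.2

/-- Stacked attack `A_{k,S} = [a_{k-r+1}(S); …; a_k(S)]`. -/
def Avec (a : ℕ → Fin q → ℝ) (S : Finset (Fin q)) (r k : ℕ) :
    Fin r × {i : Fin q // i ∉ S} → ℝ :=
  fun i => delv (a (k + 1 - r + (i.1 : ℕ))) S i.2

/-- Stacked input `U_{k-1} = [u_{k-r+1}; …; u_{k-1}]`. -/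
def Uvec (u : ℕ → Fin p → ℝ) (r k : ℕ) : Fin (r - 1) × Fin p → ℝ :=
  fun i => u (k + 1 - r + (i.1 : ℕ)) i.2

/-- Block matrix `D_S`, with `(i, j)` block `C(S) A^{i-j-1} B` for `i > j` and `0` otherwise. -/
def Dmat (A : Matrix (Fin n) (Fin n) ℝ) (B : Matrix (Fin n) (Fin p) ℝ)
    (C : Matrix (Fin q) (Fin n) ℝ) (S : Finset (Fin q)) (r : ℕ) :
    Matrix (Fin r × {i : Fin q // i ∉ S}) (Fin (r - 1) × Fin p) ℝ :=
  fun i j =>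
    if (j.1 : ℕ) < (i.1 : ℕ) then
      (dele C S * A ^ ((i.1 : ℕ) - (j.1 : ℕ) - 1) * B) i.2 j.2
    else 0

/-- The minimal `r` such that `rank O_S(r) = n`. -/
noncomputable def rmin (A : Matrix (Fin n) (Fin n) ℝ) (C : Matrix (Fin q) (Fin n) ℝ)
    (S : Finset (Fin q)) : ℕ :=
  sInf {r : ℕ | (Omat A C S r).rank = n}

/-- `b`: the maximum of `rmin` over all index sets of cardinality `s`. -/
noncomputable def bBound (A : Matrix (Fin n) (Fin n) ℝ) (C : Matrix (Fin q) (Fin n) ℝ)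
    (s : ℕ) : ℕ :=
  (Finset.powersetCard s (Finset.univ : Finset (Fin q))).sup (rmin A C)

/-- Windowed least-squares estimate `x̂_S(m) = L_S (Y_{k+m-1,S} - D_S U_{k+m-2})`. -/
noncomputable def xhat (A : Matrix (Fin n) (Fin n) ℝ) (B : Matrix (Fin n) (Fin p) ℝ)
    (C : Matrix (Fin q) (Fin n) ℝ) (u : ℕ → Fin p → ℝ) (y : ℕ → Fin q → ℝ)
    (S : Finset (Fin q)) (r k m : ℕ) : Fin n → ℝ :=
  Lmat A C S r *ᵥ (Yvec y S r (k + m - 1) - Dmat A B C S r *ᵥ Uvec u r (k + m - 1))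

/-- The filtered index families `D_ς` of Algorithm 1. -/
def Dfam (A : Matrix (Fin n) (Fin n) ℝ) (B : Matrix (Fin n) (Fin p) ℝ)
    (C : Matrix (Fin q) (Fin n) ℝ) (u : ℕ → Fin p → ℝ) (y : ℕ → Fin q → ℝ)
    (s r k : ℕ) : ℕ → Set (Finset (Fin q))
  | 0 => {Γ' : Finset (Fin q) | Γ'.card = s}
  | ς + 1 => {Γ' ∈ Dfam A B C u y s r k ς |
      xhat A B C u y Γ' r k (ς + 2) - A *ᵥ xhat A B C u y Γ' r k (ς + 1)
        - B *ᵥ u (k + 1 - r + ς) = 0}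

theorem _root_.Matrix.isUnit_of_rank_eq_card {m R : Type*} [Fintype m] [DecidableEq m] [Field R]
    (M : Matrix m m R) (h : M.rank = Fintype.card m) : IsUnit M := by
  rw [← Matrix.mulVec_surjective_iff_isUnit]
  change Function.Surjective M.mulVecLin
  rw [← LinearMap.range_eq_top]
  apply Submodule.eq_top_of_finrank_eq
  rw [← Matrix.rank, h, Module.finrank_fintype_fun_eq_card]

theorem Lmat_mul_Omat {A : Matrix (Fin n) (Fin n) ℝ} {C : Matrix (Fin q) (Fin n) ℝ}
    {S : Finset (Fin q)} {r : ℕ} (h : (Omat A C S r).rank = n) :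
    Lmat A C S r * Omat A C S r = 1 := by
  have hunit : IsUnit ((Omat A C S r)ᵀ * Omat A C S r) :=
    Matrix.isUnit_of_rank_eq_card _ (by rw [Matrix.rank_transpose_mul_self, h, Fintype.card_fin])
  rw [Lmat, Matrix.mul_assoc, Matrix.nonsing_inv_mul _ ((Matrix.isUnit_iff_isUnit_det _).mp hunit)]

theorem state_eq_of_step {A : Matrix (Fin n) (Fin n) ℝ} {B : Matrix (Fin n) (Fin p) ℝ}
    {x : ℕ → Fin n → ℝ} {u : ℕ → Fin p → ℝ} (hx : ∀ k, x (k + 1) = A *ᵥ x k + B *ᵥ u k)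
    (k₀ i : ℕ) :
    x (k₀ + i) = A ^ i *ᵥ x k₀ + ∑ j ∈ Finset.range i, (A ^ (i - j - 1) * B) *ᵥ u (k₀ + j) := by
  induction i with
  | zero => simp
  | succ i ih =>
    rw [← add_assoc, hx, ih, Matrix.mulVec_add, Matrix.mulVec_mulVec, ← pow_succ',
      Matrix.mulVec_sum, Finset.sum_range_succ, Nat.add_sub_cancel_left, Nat.sub_self, pow_zero,
      Matrix.one_mul, add_assoc]
    congr 2
    refine Finset.sum_congr rfl fun j hj => ?_
    rw [Matrix.mulVec_mulVec, ← Matrix.mul_assoc, ← pow_succ',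
      show i - j - 1 + 1 = i + 1 - j - 1 by have := Finset.mem_range.mp hj; omega]

theorem Omat_mulVec_apply (A : Matrix (Fin n) (Fin n) ℝ) (C : Matrix (Fin q) (Fin n) ℝ)
    (S : Finset (Fin q)) (r : ℕ) (v : Fin n → ℝ) (i : Fin r) (t : {i : Fin q // i ∉ S}) :
    (Omat A C S r *ᵥ v) (i, t) = (C *ᵥ A ^ (i : ℕ) *ᵥ v) t.1 := by
  rw [Matrix.mulVec_mulVec]
  rfl

theorem Dmat_mulVec_Uvec_apply (A : Matrix (Fin n) (Fin n) ℝ) (B : Matrix (Fin n) (Fin p) ℝ)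
    (C : Matrix (Fin q) (Fin n) ℝ) (u : ℕ → Fin p → ℝ) (S : Finset (Fin q)) (r k : ℕ)
    (i : Fin r) (t : {i : Fin q // i ∉ S}) :
    (Dmat A B C S r *ᵥ Uvec u r k) (i, t) =
      (C *ᵥ ∑ j ∈ Finset.range i, (A ^ (i - j - 1) * B) *ᵥ u (k + 1 - r + j)) t.1 := by
  have hrow : ∀ j : Fin (r - 1), ∑ l, Dmat A B C S r (i, t) (j, l) * Uvec u r k (j, l) =
      if (j : ℕ) < i then (C *ᵥ (A ^ ((i : ℕ) - j - 1) * B) *ᵥ u (k + 1 - r + j)) t.1 else 0 := by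
    intro j
    split_ifs with hj
    · simp only [Dmat, hj, if_true, Uvec, Matrix.mulVec_mulVec, ← Matrix.mul_assoc]
      rfl
    · simp [Dmat, hj]
  rw [Matrix.mulVec_sum, Finset.sum_apply, Matrix.mulVec, dotProduct, Fintype.sum_prod_type]
  simp only [hrow]
  rw [Fin.sum_univ_eq_sum_range (fun j => if j < (i : ℕ) then
      (C *ᵥ (A ^ (i - j - 1) * B) *ᵥ u (k + 1 - r + j)) t.1 else 0), ← Finset.sum_filter]
  congr 1
  ext j
  simp only [Finset.mem_filter, Finset.mem_range]
  omega

theorem Yvec_eq_of_traj {A : Matrix (Fin n) (Fin n) ℝ} {B : Matrix (Fin n) (Fin p) ℝ}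
    {C : Matrix (Fin q) (Fin n) ℝ} {x : ℕ → Fin n → ℝ} {u : ℕ → Fin p → ℝ}
    {a y : ℕ → Fin q → ℝ} (hT : Traj A B C x u a y) (S : Finset (Fin q)) (r k : ℕ) :
    Yvec y S r k =
      Omat A C S r *ᵥ x (k + 1 - r) + Dmat A B C S r *ᵥ Uvec u r k + Avec a S r k := by
  funext ⟨i, t⟩
  rw [Pi.add_apply, Pi.add_apply, Omat_mulVec_apply, Dmat_mulVec_Uvec_apply,
    ← Pi.add_apply (C *ᵥ _), ← Matrix.mulVec_add, ← state_eq_of_step hT.1]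
  simp only [Yvec, Avec, delv, hT.2, Pi.add_apply]

theorem Avec_eq_zero_of_support_subset {a : ℕ → Fin q → ℝ} {Γ : Finset (Fin q)}
    (hsupp : ∀ i, Function.support (a i) ⊆ (Γ : Set (Fin q))) (r k : ℕ) :
    Avec a Γ r k = 0 := by
  funext ⟨i, t⟩
  exact Function.notMem_support.mp fun h => t.2 (hsupp _ h)

theorem state_in_candidate_set_general
    (s : ℕ)
    (A : Matrix (Fin n) (Fin n) ℝ) (B : Matrix (Fin n) (Fin p) ℝ)
    (C : Matrix (Fin q) (Fin n) ℝ)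
    (hSO : SparseObs A C s)
    (x : ℕ → Fin n → ℝ) (u : ℕ → Fin p → ℝ) (a y : ℕ → Fin q → ℝ)
    (hT : Traj A B C x u a y)
    (Γ : Finset (Fin q)) (hΓ : Γ.card = s)
    (hsupp : ∀ i, Function.support (a i) ⊆ (Γ : Set (Fin q))) :
    ∃ r ≤ n, ∀ k, r ≤ k + 1 →
      ∃ Γ' : Finset (Fin q), Γ'.card = s ∧
        Lmat A C Γ' r *ᵥ (Yvec y Γ' r k - Dmat A B C Γ' r *ᵥ Uvec u r k) =
          x (k + 1 - r) := by
  refine ⟨n, le_rfl, fun k _ => ⟨Γ, hΓ, ?_⟩⟩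
  rw [Yvec_eq_of_traj hT, Avec_eq_zero_of_support_subset hsupp, add_zero, add_sub_cancel_right,
    Matrix.mulVec_mulVec, Lmat_mul_Omat (hSO Γ hΓ), Matrix.one_mulVec]

/-- Theorem 1: under `s`-sparse observability and attacks supported on a fixed
`Γ` with `|Γ| = s`, there exists `r ≤ n` such that for every `k ≥ r - 1` the state `x_{k-r+1}`
equals at least one element of `X(k,r) = {L_{Γ'}(Y_{k,Γ'} - D_{Γ'} U_{k-1}) : |Γ'| = s}`. -/
theorem state_in_candidate_set
    (hn : 0 < n) (hp : 0 < p) (hq : 0 < q) (s : ℕ) (hs : 0 < s)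
    (A : Matrix (Fin n) (Fin n) ℝ) (B : Matrix (Fin n) (Fin p) ℝ)
    (C : Matrix (Fin q) (Fin n) ℝ)
    (hSO : SparseObs A C s)
    (x : ℕ → Fin n → ℝ) (u : ℕ → Fin p → ℝ) (a y : ℕ → Fin q → ℝ)
    (hT : Traj A B C x u a y)
    (Γ : Finset (Fin q)) (hΓ : Γ.card = s)
    (hsupp : ∀ i, Function.support (a i) ⊆ (Γ : Set (Fin q))) :
    ∃ r ≤ n, ∀ k, r ≤ k + 1 →
      ∃ Γ' : Finset (Fin q), Γ'.card = s ∧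
        Lmat A C Γ' r *ᵥ (Yvec y Γ' r k - Dmat A B C Γ' r *ᵥ Uvec u r k) =
          x (k + 1 - r) :=
  state_in_candidate_set_general s A B C hSO x u a y hT Γ hΓ hsupp

end SS
end

section
/- (Theorem 2) Suppose the system is (s+1)-sparse observable and q ≥ s+2, and suppose the attacks satisfy supp(a_i) ⊆ Γ for all i, for some fixed Γ ⊆ {1,…,q} with |Γ| = s. Then there exists r ≤ n (namely r = b₁, the maximum over all size-(s+1) sets Λ of the minimum r' with rank O_Λ(r') = n) such that for every k ≥ r−1 there are at least q − s sets Λ ⊆ {1,…,q} with |Λ| = s+1 for which L_Λ(Y_{k,Λ} − D_Λ U_{k−1}) = x_{k−r+1}; that is, x_{k−r+1} equals at least q − s elements of the candidate set Y(k,r) = { L_Λ(Y_{k,Λ} − D_Λ U_{k−1}) : |Λ| = s+1 }. -/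
open Matrix

namespace SS

variable {n p q : ℕ}

lemma isUnit_of_rank_eq (M : Matrix (Fin n) (Fin n) ℝ) (h : M.rank = n) : IsUnit M := by
  rw [← Matrix.mulVec_surjective_iff_isUnit]
  have htop : LinearMap.range M.mulVecLin = ⊤ := by
    apply Submodule.eq_top_of_finrank_eq
    rw [Matrix.rank] at h
    rw [h]
    simp [Module.finrank_pi]
  intro v
  have : v ∈ LinearMap.range M.mulVecLin := htop ▸ Submodule.mem_top
  obtain ⟨w, hw⟩ := this
  exact ⟨w, hw⟩

lemma mulVec_sum' {ι' : Type*} {κ : Type*} [Fintype κ] (M : Matrix κ (Fin n) ℝ) (s : Finset ι')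
    (f : ι' → Fin n → ℝ) : M *ᵥ (∑ j ∈ s, f j) = ∑ j ∈ s, M *ᵥ f j :=
  map_sum M.mulVecLin f s

lemma state_sol {A : Matrix (Fin n) (Fin n) ℝ} {B : Matrix (Fin n) (Fin p) ℝ}
    {C : Matrix (Fin q) (Fin n) ℝ} {x u a y} (hT : Traj A B C x u a y) (m : ℕ) :
    ∀ i : ℕ, x (m + i) = (A ^ i) *ᵥ x m
      + ∑ j ∈ Finset.range i, (A ^ (i - j - 1) * B) *ᵥ u (m + j) := by
  intro i
  induction i with
  | zero => simp [Matrix.one_mulVec]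
  | succ i ih =>
      have h1 : x (m + (i + 1)) = A *ᵥ x (m + i) + B *ᵥ u (m + i) := by
        rw [← Nat.add_assoc]; exact hT.1 (m + i)
      have hsum : ∀ j ∈ Finset.range i,
          A *ᵥ ((A ^ (i - j - 1) * B) *ᵥ u (m + j)) = (A ^ (i + 1 - j - 1) * B) *ᵥ u (m + j) := by
        intro j hj
        rw [Finset.mem_range] at hj
        have he : i + 1 - j - 1 = (i - j - 1) + 1 := by omega
        rw [Matrix.mulVec_mulVec, ← Matrix.mul_assoc, ← pow_succ', he]
      rw [h1, ih, Matrix.mulVec_add, Matrix.mulVec_mulVec, ← pow_succ',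
        mulVec_sum', Finset.sum_congr rfl hsum, Finset.sum_range_succ]
      have : (A ^ (i + 1 - i - 1) * B) *ᵥ u (m + i) = B *ᵥ u (m + i) := by
        simp
      rw [this, add_assoc]

lemma dele_mul_apply {m' : ℕ} (C : Matrix (Fin q) (Fin n) ℝ) (S : Finset (Fin q))
    (M : Matrix (Fin n) (Fin m') ℝ) (e : {i : Fin q // i ∉ S}) (j : Fin m') :
    (dele C S * M) e j = (C * M) e.1 j := by
  simp [dele, Matrix.mul_apply]

lemma key_identity {A : Matrix (Fin n) (Fin n) ℝ} {B : Matrix (Fin n) (Fin p) ℝ}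
    {C : Matrix (Fin q) (Fin n) ℝ} {x u a y} (hT : Traj A B C x u a y)
    (Λ : Finset (Fin q)) (ha : ∀ t j, j ∉ Λ → a t j = 0) (r k : ℕ) :
    Yvec y Λ r k - Dmat A B C Λ r *ᵥ Uvec u r k = Omat A C Λ r *ᵥ x (k + 1 - r) := by
  funext ie
  obtain ⟨i, e⟩ := ie
  set m := k + 1 - r with hm
  have hx := state_sol hT m i
  -- Yvec entry
  have hy : Yvec y Λ r k (i, e) = (C *ᵥ x (m + (i : ℕ))) e.1 := by
    simp only [Yvec, delv, hT.2, Pi.add_apply]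
    rw [ha _ _ e.2, add_zero]
  -- Dmat *ᵥ Uvec entry
  have hD : (Dmat A B C Λ r *ᵥ Uvec u r k) (i, e)
      = ∑ j ∈ Finset.range (i : ℕ), ((C * A ^ ((i : ℕ) - j - 1) * B) *ᵥ u (m + j)) e.1 := by
    rw [Matrix.mulVec]
    show ∑ jl : Fin (r - 1) × Fin p, _ = _
    rw [Fintype.sum_prod_type]
    have step : ∀ jf : Fin (r - 1),
        (∑ l : Fin p, Dmat A B C Λ r (i, e) (jf, l) * Uvec u r k (jf, l))
        = if (jf : ℕ) < (i : ℕ) then ((C * A ^ ((i : ℕ) - (jf : ℕ) - 1) * B) *ᵥ u (m + (jf : ℕ))) e.1 else 0 := by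
      intro jf
      by_cases hlt : (jf : ℕ) < (i : ℕ)
      · simp only [Dmat, Uvec, hlt, if_true]
        rw [Matrix.mulVec]
        apply Finset.sum_congr rfl
        intro l _
        simp only [Matrix.mul_assoc, dele_mul_apply, hm]
      · simp [Dmat, Uvec, hlt]
    rw [Finset.sum_congr rfl (fun jf _ => step jf)]
    rw [Fin.sum_univ_eq_sum_range
      (fun j => if j < (i : ℕ) then ((C * A ^ ((i : ℕ) - j - 1) * B) *ᵥ u (m + j)) e.1 else 0)]
    rw [← Finset.sum_filter]
    apply Finset.sum_congr
    · ext j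
      simp only [Finset.mem_filter, Finset.mem_range]
      have := i.2
      omega
    · intro _ _; rfl
  -- Omat entry
  have hO : (Omat A C Λ r *ᵥ x m) (i, e) = ((C * A ^ (i : ℕ)) *ᵥ x m) e.1 := by
    rw [Matrix.mulVec, Matrix.mulVec]
    apply Finset.sum_congr rfl
    intro t _
    have h2 : Omat A C Λ r (i, e) t = (C * A ^ (i : ℕ)) e.1 t := dele_mul_apply C Λ _ e t
    simp only [h2]
  have hCx : (C *ᵥ x (m + (i : ℕ))) e.1
      = ((C * A ^ (i : ℕ)) *ᵥ x m) e.1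
        + ∑ j ∈ Finset.range (i : ℕ), ((C * A ^ ((i : ℕ) - j - 1) * B) *ᵥ u (m + j)) e.1 := by
    rw [hx, Matrix.mulVec_add, mulVec_sum']
    simp only [Pi.add_apply, Matrix.mulVec_mulVec, Finset.sum_apply, Matrix.mul_assoc]
  show Yvec y Λ r k (i, e) - (Dmat A B C Λ r *ᵥ Uvec u r k) (i, e) = (Omat A C Λ r *ᵥ x m) (i, e)
  rw [hy, hD, hO, hCx]
  ring

/-- Theorem 2: under `(s+1)`-sparse observability with `q ≥ s + 2` and attacks
supported on a fixed `Γ` with `|Γ| = s`, there exists `r ≤ n` such that for every `k ≥ r - 1`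
there are at least `q - s` sets `Λ` with `|Λ| = s + 1` whose estimates equal `x_{k-r+1}`. -/
theorem state_matches_many_candidates
    (hn : 0 < n) (hp : 0 < p) (hq : 0 < q) (s : ℕ) (hs : 0 < s)
    (A : Matrix (Fin n) (Fin n) ℝ) (B : Matrix (Fin n) (Fin p) ℝ)
    (C : Matrix (Fin q) (Fin n) ℝ)
    (hSO : SparseObs A C (s + 1)) (hqs : s + 2 ≤ q)
    (x : ℕ → Fin n → ℝ) (u : ℕ → Fin p → ℝ) (a y : ℕ → Fin q → ℝ)
    (hT : Traj A B C x u a y)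
    (Γ : Finset (Fin q)) (hΓ : Γ.card = s)
    (hsupp : ∀ i, Function.support (a i) ⊆ (Γ : Set (Fin q))) :
    ∃ r ≤ n, ∀ k, r ≤ k + 1 →
      ∃ T : Finset (Finset (Fin q)), q - s ≤ T.card ∧
        ∀ Λ ∈ T, Λ.card = s + 1 ∧
          Lmat A C Λ r *ᵥ (Yvec y Λ r k - Dmat A B C Λ r *ᵥ Uvec u r k) =
            x (k + 1 - r) := by
  refine ⟨n, le_refl n, ?_⟩
  intro k hk
  refine ⟨(Finset.univ \ Γ).image (fun i => insert i Γ), ?_, ?_⟩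
  · rw [Finset.card_image_of_injOn]
    · rw [Finset.card_sdiff_of_subset (Finset.subset_univ _), Finset.card_univ, Fintype.card_fin, hΓ]
    · intro i hi j hj hij
      simp only [Finset.coe_sdiff, Set.mem_diff, Finset.coe_univ, Set.mem_univ, true_and,
        Finset.mem_coe] at hi hj
      simp only at hij
      have : i ∈ insert j Γ := hij ▸ Finset.mem_insert_self i Γ
      rcases Finset.mem_insert.1 this with h | h
      · exact h
      · exact absurd h hi
  · intro Λ hΛ
    simp only [Finset.mem_image, Finset.mem_sdiff, Finset.mem_univ, true_and] at hΛ
    obtain ⟨i, hiΓ, rfl⟩ := hΛ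
    have hcard : (insert i Γ).card = s + 1 := by
      rw [Finset.card_insert_of_notMem hiΓ, hΓ]
    refine ⟨hcard, ?_⟩
    have ha : ∀ t j, j ∉ insert i Γ → a t j = 0 := by
      intro t j hj
      by_contra h
      exact hj (Finset.mem_insert_of_mem (hsupp t h))
    rw [key_identity hT _ ha n k, Matrix.mulVec_mulVec]
    have hrank : (Omat A C (insert i Γ) n).rank = n := hSO _ hcard
    have hU : IsUnit ((Omat A C (insert i Γ) n)ᵀ * Omat A C (insert i Γ) n) := by
      apply isUnit_of_rank_eq
      rw [Matrix.rank_transpose_mul_self, hrank]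
    have hLO : Lmat A C (insert i Γ) n * Omat A C (insert i Γ) n = 1 := by
      rw [Lmat, Matrix.mul_assoc,
        Matrix.nonsing_inv_mul _ ((Matrix.isUnit_iff_isUnit_det _).1 hU)]
    rw [hLO, Matrix.one_mulVec]


end SS
end
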